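/- arXiv:2307.01478 — 8 statements merged into one kernel-verified Lean document; each statement's English description precedes it below -/
import Mathlib

section
/- If p and q are distinct prime numbers, then p²/q is not the cube of a rational number. -/
theorem padicValRat_natCast_pow_div_self {p q : ℕ} [hq : Fact q.Prime] (hqp : ¬q ∣ p) (k : ℕ) :
    padicValRat q ((p : ℚ) ^ k / q) = -1 := by
  have hp0 : (p : ℚ) ≠ 0 := Nat.cast_ne_zero.mpr (by rintro rfl; exact hqp (dvd_zero q))
  have hq0 : (q : ℚ) ≠ 0 := Nat.cast_ne_zero.mpr hq.out.ne_zero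
  rw [padicValRat.div (pow_ne_zero k hp0) hq0, padicValRat.pow, padicValRat.self hq.out.one_lt,
    padicValRat.of_nat, padicValNat.eq_zero_of_not_dvd hqp]
  simp

theorem prime_sq_div_prime_not_cube (p q : ℕ) (hp : p.Prime) (hq : q.Prime)
    (hpq : p ≠ q) : ¬∃ r : ℚ, (p : ℚ) ^ 2 / (q : ℚ) = r ^ 3 := by
  have := Fact.mk hq
  rintro ⟨r, hr⟩
  have hqp : ¬q ∣ p := fun h => hpq ((Nat.prime_dvd_prime_iff_eq hq hp).mp h).symm
  -- the `q`-adic valuation of the left side is `-1`, of the right side a multiple of `3`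
  have hval := congrArg (padicValRat q) hr
  rw [padicValRat_natCast_pow_div_self hqp, padicValRat.pow] at hval
  omega
end

section
/- The quotient of ℚ* by the equivalence relation ≈ (where a ≈ b iff a/b or a²/b is a rational cube) is infinite. -/
/-!
For each prime `p`, whether `3` divides the `p`-adic valuation changes neither under
multiplication by a cube nor under squaring, since `2` is invertible modulo `3`; so it is
constant on the classes of `≈`. For a prime `q ≠ p`, `v_p(q) = 0` is divisible by `3` while
`v_p(p) = 1` is not, so distinct primes lie in distinct classes.
-/

namespace padicValRat

variable {p : ℕ} [Fact p.Prime]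

theorem units_div (a b : ℚˣ) :
    padicValRat p ((a / b : ℚˣ) : ℚ) = padicValRat p a - padicValRat p b := by
  rw [Units.val_div_eq_div_val, padicValRat.div a.ne_zero b.ne_zero]

theorem units_pow (a : ℚˣ) (n : ℕ) :
    padicValRat p ((a ^ n : ℚˣ) : ℚ) = n * padicValRat p a := by
  rw [Units.val_pow_eq_pow_val, padicValRat.pow]

theorem three_dvd_iff_of_cube_rel {a b : ℚˣ}
    (h : (∃ k : ℚˣ, a / b = k ^ 3) ∨ (∃ k : ℚˣ, a ^ 2 / b = k ^ 3)) :
    3 ∣ padicValRat p a ↔ 3 ∣ padicValRat p b := by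
  rcases h with ⟨k, hk⟩ | ⟨k, hk⟩ <;>
  · have hv := congrArg (fun u : ℚˣ => padicValRat p u) hk
    simp only [units_div, units_pow, Nat.cast_ofNat] at hv
    omega

theorem primes {q : ℕ} [Fact q.Prime] (hpq : p ≠ q) : padicValRat p q = 0 := by
  rw [padicValRat.of_nat, padicValNat_primes hpq, Nat.cast_zero]

end padicValRat

theorem rat_units_quot_approx_infinite :
    Infinite (Quot (fun a b : ℚˣ =>
      (∃ k : ℚˣ, a / b = k ^ 3) ∨ (∃ k : ℚˣ, a ^ 2 / b = k ^ 3))) := by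
  let prime : Nat.Primes → ℚˣ := fun p => Units.mk0 (p : ℚ) (Nat.cast_ne_zero.mpr p.prop.ne_zero)
  refine Infinite.of_injective (fun p => Quot.mk _ (prime p)) fun p q hpq => ?_
  have := Fact.mk p.prop
  have := Fact.mk q.prop
  have hdvd := congrArg (Quot.lift (fun a : ℚˣ => 3 ∣ padicValRat p a)
    fun _ _ h => propext (padicValRat.three_dvd_iff_of_cube_rel h)) hpq
  by_contra hne
  simp only [prime, Units.val_mk0, padicValRat.self p.prop.one_lt,
    padicValRat.primes (Subtype.coe_ne_coe.mpr hne)] at hdvd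
  norm_num at hdvd
end

section
/- Let p, q, a, b, c, d ∈ K with p = c = 0 and suppose the system (3) of endo-commutativity equations holds for (p,q,a,b,c,d). Then a = 0. -/
theorem ecs010_empty_general (K : Type*) [Field K] (p a b c d : K)
    (hp : p = 0) (hc : c = 0)
    (h3 : p*(d - b) = a^2 - c^2) :
    a = 0 := by
  subst hp hc
  exact pow_eq_zero_iff two_ne_zero |>.mp (by linear_combination -h3)

theorem ecs010_empty (K : Type*) [Field K] (p q a b c d : K)
    (hp : p = 0) (hc : c = 0)
    (h1 : p*q + p*c = p*b^2 + a^2*b + a*b*c)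
    (h2 : p*(c - a) = (b - d) * (p*(b + d) - q*(a + c)))
    (h3 : p*(d - b) = a^2 - c^2)
    (h4 : q^2 + p*d = a^2 + q*b^2 + a*b^2 + a*b*d)
    (h5 : q*(d - b) = a*b - c*d) :
    a = 0 :=
  ecs010_empty_general K p a b c d hp hc h3
end

section
/- Let p, q, a, b, c, d ∈ K with a = c = 0 and p ≠ 0, and suppose the system (3) of endo-commutativity equations holds. Then q = b = d = 0. -/
theorem ecs100_form_general (K : Type*) [Field K] (p q a b c d : K)
    (ha : a = 0) (hc : c = 0) (hp : p ≠ 0)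
    (h1 : p*q + p*c = p*b^2 + a^2*b + a*b*c)
    (h3 : p*(d - b) = a^2 - c^2)
    (h4 : q^2 + p*d = a^2 + q*b^2 + a*b^2 + a*b*d) :
    q = 0 ∧ b = 0 ∧ d = 0 := by
  subst ha hc
  have hq : q = b ^ 2 := mul_left_cancel₀ hp (by linear_combination h1)
  have hd : d = b := mul_left_cancel₀ hp (by linear_combination h3)
  subst hq hd
  have hd0 : d = 0 := (mul_eq_zero.mp (by linear_combination h4 : p * d = 0)).resolve_left hp
  simp [hd0]

theorem ecs100_form (K : Type*) [Field K] (p q a b c d : K)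
    (ha : a = 0) (hc : c = 0) (hp : p ≠ 0)
    (h1 : p*q + p*c = p*b^2 + a^2*b + a*b*c)
    (h2 : p*(c - a) = (b - d) * (p*(b + d) - q*(a + c)))
    (h3 : p*(d - b) = a^2 - c^2)
    (h4 : q^2 + p*d = a^2 + q*b^2 + a*b^2 + a*b*d)
    (h5 : q*(d - b) = a*b - c*d) :
    q = 0 ∧ b = 0 ∧ d = 0 :=
  ecs100_form_general K p q a b c d ha hc hp h1 h3 h4
end

section
/- Let A be the 2-dimensional algebra over K with basis {e, f} and multiplication e² = f, ef = fe = 0, f² = pe with p ≠ 0. Then A is endo-commutative: (x·x)·(y·y) = (x·y)·(x·y) for all x, y ∈ A. -/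
def smul2 {K : Type*} [Field K] (p : K) (x y : K × K) : K × K :=
  (p * x.2 * y.2, x.1 * y.1)

theorem typeI_endo_commutative_general (K : Type*) [Field K] (p : K)
    (x y : K × K) :
    smul2 p (smul2 p x x) (smul2 p y y) = smul2 p (smul2 p x y) (smul2 p x y) := by
  ext <;> simp only [smul2] <;> ring

theorem typeI_endo_commutative (K : Type*) [Field K] (p : K) (hp : p ≠ 0)
    (x y : K × K) :
    smul2 p (smul2 p x x) (smul2 p y y) = smul2 p (smul2 p x y) (smul2 p x y) :=
  typeI_endo_commutative_general K p x y
end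

section
/- Let p, p' ∈ K*. If p = p'·t³ for some t ∈ K* (i.e., p ∼ p'), then there exist x, y, z, w ∈ K with xw − yz ≠ 0 satisfying the system: p'y² = z, x² = w, p'w² = px, z² = py, yw = 0, xz = 0. (Hence S(p,0,0,0,0,0) ≅ S(p',0,0,0,0,0).) -/
theorem sim_implies_transformation_general (K : Type*) [Field K] (p p' : K)
    (t : K) (ht : t ≠ 0) (h : p = p' * t ^ 3) :
    ∃ x y z w : K, x * w - y * z ≠ 0 ∧
      p' * y ^ 2 = z ∧ x ^ 2 = w ∧ p' * w ^ 2 = p * x ∧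
      z ^ 2 = p * y ∧ y * w = 0 ∧ x * z = 0 := by
  have hdet : t * t ^ 2 - 0 * 0 ≠ 0 := by simpa [← pow_succ'] using pow_ne_zero 3 ht
  exact ⟨t, 0, 0, t ^ 2, hdet, by ring, by ring, by rw [h]; ring, by ring, by ring, by ring⟩

theorem sim_implies_transformation (K : Type*) [Field K] (p p' : K)
    (hp : p ≠ 0) (hp' : p' ≠ 0) (t : K) (ht : t ≠ 0) (h : p = p' * t ^ 3) :
    ∃ x y z w : K, x * w - y * z ≠ 0 ∧
      p' * y ^ 2 = z ∧ x ^ 2 = w ∧ p' * w ^ 2 = p * x ∧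
      z ^ 2 = p * y ∧ y * w = 0 ∧ x * z = 0 :=
  sim_implies_transformation_general K p p' t ht h
end

section
/- Let p, p' ∈ K*. If p² = p'·t³ for some t ∈ K* (i.e., p² ∼ p'), then there exist x, y, z, w ∈ K with xw − yz ≠ 0 satisfying: p'y² = z, x² = w, p'w² = px, z² = py, yw = 0, xz = 0. -/
/-! An antidiagonal transformation (`x = w = 0`) satisfies four of the six equations outright;
the remaining two, `z = p' y²` and `z² = p y`, reduce to `p'² y³ = p`. Since `p² = p' t³`, the
element `y = p / (p' t)` is a solution. -/

theorem exists_antidiagonal_transformation {K : Type*} [Field K] {p p' y : K}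
    (hp' : p' ≠ 0) (hy : y ≠ 0) (hcube : p' ^ 2 * y ^ 3 = p) :
    ∃ x y z w : K, x * w - y * z ≠ 0 ∧
      p' * y ^ 2 = z ∧ x ^ 2 = w ∧ p' * w ^ 2 = p * x ∧
      z ^ 2 = p * y ∧ y * w = 0 ∧ x * z = 0 := by
  refine ⟨0, y, p' * y ^ 2, 0, ?_, rfl, by ring, by ring, ?_, by ring, by ring⟩
  · simp [hp', hy]
  · rw [← hcube]
    ring

theorem sq_mul_cube_div_eq {K : Type*} [Field K] {p p' t : K}
    (hp' : p' ≠ 0) (ht : t ≠ 0) (h : p ^ 2 = p' * t ^ 3) :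
    p' ^ 2 * (p / (p' * t)) ^ 3 = p := by
  field_simp
  rw [pow_succ p 2, h]
  ring

theorem sq_sim_implies_transformation (K : Type*) [Field K] (p p' : K)
    (hp : p ≠ 0) (hp' : p' ≠ 0) (t : K) (ht : t ≠ 0) (h : p ^ 2 = p' * t ^ 3) :
    ∃ x y z w : K, x * w - y * z ≠ 0 ∧
      p' * y ^ 2 = z ∧ x ^ 2 = w ∧ p' * w ^ 2 = p * x ∧
      z ^ 2 = p * y ∧ y * w = 0 ∧ x * z = 0 :=
  exists_antidiagonal_transformation hp' (div_ne_zero hp (mul_ne_zero hp' ht))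
    (sq_mul_cube_div_eq hp' ht h)
end

section
/- Let p, p' ∈ K* and suppose x, y, z, w ∈ K with xw − yz ≠ 0 satisfy: p'y² = z, x² = w, p'w² = px, z² = py, yw = 0, xz = 0. Then either p/p' is a cube in K* or p²/p' is a cube in K* (i.e., p ≈ p'). -/
/-! A transformation matrix with `xz = 0` is either anti-diagonal at `w = x² = 0`, where
`z = p'y²` and `z² = py` give `p = p'²y³`, or has `z = 0`, where `w = x²` and `p'w² = px`
give `p = p'x³`; the determinant keeps `y`, resp. `x`, nonzero. -/

theorem eq_mul_pow_three_of_mul_pow_four_eq_mul {R : Type*} [CommRing R] [NoZeroDivisors R]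
    {c p x : R} (hx : x ≠ 0) (h : c * x ^ 4 = p * x) : p = c * x ^ 3 := by
  have hcancel : (p - c * x ^ 3) * x = 0 := by linear_combination -h
  exact sub_eq_zero.mp ((mul_eq_zero.mp hcancel).resolve_right hx)

theorem transformation_implies_approx_general (K : Type*) [Field K] (p p' : K)
    (hp' : p' ≠ 0) (x y z w : K)
    (hdet : x * w - y * z ≠ 0)
    (h1 : p' * y ^ 2 = z) (h2 : x ^ 2 = w) (h3 : p' * w ^ 2 = p * x)
    (h4 : z ^ 2 = p * y) (h6 : x * z = 0) :
    (∃ k : K, k ≠ 0 ∧ p / p' = k ^ 3) ∨ (∃ k : K, k ≠ 0 ∧ p ^ 2 / p' = k ^ 3) := by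
  rcases mul_eq_zero.mp h6 with rfl | rfl
  · obtain rfl : w = 0 := by rw [← h2, zero_pow two_ne_zero]
    have hy : y ≠ 0 := by rintro rfl; simp at hdet
    have hp : p = p' ^ 2 * y ^ 3 :=
      eq_mul_pow_three_of_mul_pow_four_eq_mul hy (by linear_combination h4 + (p' * y ^ 2 + z) * h1)
    refine Or.inr ⟨p' * y ^ 2, mul_ne_zero hp' (pow_ne_zero 2 hy), ?_⟩
    rw [hp]
    field_simp
  · have hx : x ≠ 0 := by rintro rfl; simp at hdet
    have hp : p = p' * x ^ 3 :=
      eq_mul_pow_three_of_mul_pow_four_eq_mul hx (by linear_combination h3 + p' * (x ^ 2 + w) * h2)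
    refine Or.inl ⟨x, hx, ?_⟩
    rw [hp]
    field_simp

theorem transformation_implies_approx (K : Type*) [Field K] (p p' : K)
    (hp : p ≠ 0) (hp' : p' ≠ 0) (x y z w : K)
    (hdet : x * w - y * z ≠ 0)
    (h1 : p' * y ^ 2 = z) (h2 : x ^ 2 = w) (h3 : p' * w ^ 2 = p * x)
    (h4 : z ^ 2 = p * y) (h5 : y * w = 0) (h6 : x * z = 0) :
    (∃ k : K, k ≠ 0 ∧ p / p' = k ^ 3) ∨ (∃ k : K, k ≠ 0 ∧ p ^ 2 / p' = k ^ 3) :=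
  transformation_implies_approx_general K p p' hp' x y z w hdet h1 h2 h3 h4 h6
end
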